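/- Let C₁, …, C_m, C be nonempty finite subsets of a vector space E over an arbitrary field. Suppose there exist linearly independent vectors c₁ ∈ C₁, …, c_m ∈ C_m, suppose the augmented family C₁, …, C_m, C is degenerate, and let V = span{c₁, …, c_m}. Fix 0 ≤ l ≤ m and suppose Cᵢ is not contained in V for every i with l < i ≤ m. Then the linear span L of C is contained in the subspace Q = span{c₁, …, c_l}. -/

import Mathlib

/-!
Every `x ∈ C` lies in `V`, since otherwise `c₁, …, c_m, x` would be independent. If `x`
had a nonzero coordinate along some `c_j` with `j > l`, pick `w ∈ C_j \ V` and exchange `c_j`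
for `w`: the new family stays independent because `w ∉ V`, and `x` stays outside its span
because its `c_j`-coordinate cannot be produced from `w` and the other `cᵢ`. This contradicts
degeneracy, so `x` only involves `c₁, …, c_l`.
-/

open Function Set Submodule

theorem LinearIndependent.mem_span_image_of_forall_mem_span_image_compl_singleton
    {R M ι : Type*} [Semiring R] [AddCommMonoid M] [Module R M] {v : ι → M}
    (hv : LinearIndependent R v) {x : M} (hx : x ∈ span R (range v)) {s : Set ι}
    (h : ∀ j ∉ s, x ∈ span R (v '' {j}ᶜ)) : x ∈ span R (v '' s) := by
  rw [← Finsupp.range_linearCombination] at hx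
  obtain ⟨f, rfl⟩ := hx
  refine (Finsupp.mem_span_image_iff_linearCombination R).mpr ⟨f, fun j hj => ?_, rfl⟩
  by_contra hjs
  obtain ⟨g, hg, hgf⟩ := (Finsupp.mem_span_image_iff_linearCombination R).mp (h j hjs)
  exact hg (hv hgf ▸ hj) rfl

theorem range_update_subset_insert_image_compl {ι α : Type*} [DecidableEq ι] (v : ι → α)
    (j : ι) (w : α) :
    range (update v j w) ⊆ insert w (v '' {j}ᶜ) := by
  rintro _ ⟨i, rfl⟩
  by_cases hij : i = j
  · subst hij
    simp
  · exact Or.inr ⟨i, hij, (update_of_ne hij w v).symm⟩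

section

variable {K E ι : Type*} [DivisionRing K] [AddCommGroup E] [Module K E] [DecidableEq ι]
  {v : ι → E}

theorem LinearIndependent.update_of_notMem_span (hv : LinearIndependent K v) (j : ι) {w : E}
    (hw : w ∉ span K (range v)) : LinearIndependent K (Function.update v j w) := by
  have hcompl : Function.update v j w '' {j}ᶜ = v '' {j}ᶜ :=
    image_congr fun i hi => update_of_ne hi w v
  have huniv : insert j {j}ᶜ = (univ : Set ι) := by simp [insert_eq]
  rw [← linearIndepOn_univ_iff, ← huniv,
    linearIndepOn_insert (s := {j}ᶜ) (by simp), hcompl, Function.update_self]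
  refine ⟨?_, fun hw' => hw (span_mono (image_subset_range v _) hw')⟩
  exact (hv.linearIndepOn _).congr fun i hi => (update_of_ne hi w v).symm

theorem notMem_span_range_update (j : ι) {w x : E} (hw : w ∉ span K (range v))
    (hx : x ∈ span K (range v)) (hxj : x ∉ span K (v '' {j}ᶜ)) :
    x ∉ span K (range (update v j w)) := by
  intro hx'
  obtain ⟨a, z, hz, rfl⟩ :=
    mem_span_insert.mp (span_mono (range_update_subset_insert_image_compl v j w) hx')
  have hzV : z ∈ span K (range v) := span_mono (image_subset_range v _) hz
  rcases eq_or_ne a 0 with rfl | ha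
  · exact hxj (by simpa using hz)
  · have haw : a • w ∈ span K (range v) := by
      simpa using sub_mem hx hzV
    exact hw ((smul_mem_iff _ ha).mp haw)

end

theorem stmt3_general {K E : Type*} [Field K] [AddCommGroup E] [Module K E]
    {m : ℕ} (C : Fin m → Finset E) (C' : Finset E)
    (c : Fin m → E) (hc : ∀ i, c i ∈ C i) (hindep : LinearIndependent K c)
    (hdeg : ∀ (d : Fin m → E), (∀ i, d i ∈ C i) → ∀ x ∈ C',
      ¬ LinearIndependent K (Fin.snoc d x : Fin (m + 1) → E))
    (l : ℕ)
    (hout : ∀ i : Fin m, l ≤ (i : ℕ) →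
      ¬ ((C i : Set E) ⊆ (Submodule.span K (Set.range c) : Set E))) :
    Submodule.span K (C' : Set E) ≤
      Submodule.span K (c '' {i : Fin m | (i : ℕ) < l}) := by
  rw [span_le]
  intro x hx
  have hxV : x ∈ span K (range c) := by
    by_contra hxV
    exact hdeg c hc x hx (linearIndependent_finSnoc.mpr ⟨hindep, hxV⟩)
  refine hindep.mem_span_image_of_forall_mem_span_image_compl_singleton hxV fun j hj => ?_
  by_contra hxj
  obtain ⟨w, hwC, hwV⟩ := not_subset.mp (hout j (not_lt.mp hj))
  have hmem : ∀ i, update c j w i ∈ C i := by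
    intro i
    by_cases hij : i = j
    · subst hij
      simpa using hwC
    · simpa [update_of_ne hij] using hc i
  exact hdeg _ hmem x hx <| linearIndependent_finSnoc.mpr
    ⟨hindep.update_of_notMem_span j hwV, notMem_span_range_update j hwV hxV hxj⟩

/-- Lemma lmFin3: with `c₁ ∈ C₁, …, c_m ∈ C_m` linearly independent and
the augmented family `C₁, …, C_m, C` degenerate, set `V = span {c₁, …, c_m}`.
If `0 ≤ l ≤ m` and `Cᵢ ⊄ V` for every `i` with `l < i ≤ m` (0-indexed: `l ≤ i < m`),
then the span of `C` is contained in `Q = span {c₁, …, c_l}`. -/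
theorem stmt3 {K E : Type*} [Field K] [AddCommGroup E] [Module K E]
    {m : ℕ} (C : Fin m → Finset E) (C' : Finset E)
    (hC : ∀ i, (C i).Nonempty) (hC' : C'.Nonempty)
    (c : Fin m → E) (hc : ∀ i, c i ∈ C i) (hindep : LinearIndependent K c)
    (hdeg : ∀ (d : Fin m → E), (∀ i, d i ∈ C i) → ∀ x ∈ C',
      ¬ LinearIndependent K (Fin.snoc d x : Fin (m + 1) → E))
    (l : ℕ) (hl : l ≤ m)
    (hout : ∀ i : Fin m, l ≤ (i : ℕ) →
      ¬ ((C i : Set E) ⊆ (Submodule.span K (Set.range c) : Set E))) :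
    Submodule.span K (C' : Set E) ≤
      Submodule.span K (c '' {i : Fin m | (i : ℕ) < l}) :=
  stmt3_general C C' c hc hindep hdeg l hout
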